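/- For a circularly symmetric Gaussian LSSP with covariance R_X(t,s) = Q(√(ts)) C_X(t/s), the cross term D₁(θ,τ) := ∫₀^∞∫₀^∞ R_X(t₁√τ, t₂√τ) R_X*(t₁/√τ, t₂/√τ) t₁^{-i2πθ-1} t₂^{i2πθ-1} dt₁ dt₂ factorizes as D₁(θ,τ) = (M|C_X|²)(i2πθ) · ∫₀^∞ Q(u√τ) Q*(u/√τ) du/u. -/

import Mathlib

/-!
In the coordinates `u = √(t₁ t₂)`, `v = t₁ / t₂` of the open quadrant, the covariance factors as
`R(t₁ c, t₂ c) = Q(u c) C(v)`, and the weight `t₁^(-s-1) t₂^(s-1) dt₁ dt₂` becomes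
`v^(-s-1) dv · du / u`. The integrand is therefore a product of a function of `u` and a function
of `v` over a product set, and the double integral splits into the product of the two integrals.
-/

open Real MeasureTheory Set

noncomputable section

def geomMeanRatio (t : ℝ × ℝ) : ℝ × ℝ := (√(t.1 * t.2), t.1 / t.2)

def sqrtCoords (p : ℝ × ℝ) : ℝ × ℝ := (p.1 * √p.2, p.1 / √p.2)

def sqrtCoordsFDeriv (p : ℝ × ℝ) : ℝ × ℝ →L[ℝ] ℝ × ℝ :=
  (Matrix.toLin (Module.Basis.finTwoProd ℝ) (Module.Basis.finTwoProd ℝ)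
    !![√p.2, p.1 / (2 * √p.2); (√p.2)⁻¹, -(p.1 / (2 * √p.2 * p.2))]).toContinuousLinearMap

theorem hasFDerivAt_sqrtCoords {p : ℝ × ℝ} (hp : 0 < p.2) :
    HasFDerivAt sqrtCoords (sqrtCoordsFDeriv p) p := by
  have hs : √p.2 ≠ 0 := (sqrt_pos.2 hp).ne'
  have hsqrt : HasDerivAt sqrt (1 / (2 * √p.2)) p.2 := hasDerivAt_sqrt hp.ne'
  have h₁ := (hasFDerivAt_fst (𝕜 := ℝ)).fun_mul
    (hsqrt.comp_hasFDerivAt p (hasFDerivAt_snd (𝕜 := ℝ)))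
  have h₂ := (hasFDerivAt_fst (𝕜 := ℝ)).fun_mul
    ((hsqrt.inv hs).comp_hasFDerivAt p (hasFDerivAt_snd (𝕜 := ℝ)))
  have hform : sqrtCoords = fun q => (q.1 * √q.2, q.1 * (√q.2)⁻¹) := by
    funext q
    simp only [sqrtCoords, div_eq_mul_inv]
  rw [sqrtCoordsFDeriv, Matrix.toLin_finTwoProd_toContinuousLinearMap, hform]
  refine (h₁.prodMk h₂).congr_fderiv ?_
  ext <;> simp [field, sq_sqrt hp.le]

theorem det_sqrtCoordsFDeriv {p : ℝ × ℝ} (hp : 0 < p.2) :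
    (sqrtCoordsFDeriv p).det = -(p.1 / p.2) := by
  have hs : √p.2 ^ 2 = p.2 := sq_sqrt hp.le
  have hs0 : √p.2 ≠ 0 := (sqrt_pos.2 hp).ne'
  simp only [sqrtCoordsFDeriv, ContinuousLinearMap.det, LinearMap.coe_toContinuousLinearMap,
    LinearMap.det_toLin, Matrix.det_fin_two_of]
  field_simp
  linear_combination p.1 * hs

theorem geomMeanRatio_sqrtCoords_mul {p : ℝ × ℝ} (hp : p ∈ Ioi 0 ×ˢ Ioi 0) {c : ℝ}
    (hc : 0 < c) :
    geomMeanRatio ((sqrtCoords p).1 * c, (sqrtCoords p).2 * c) = (p.1 * c, p.2) := by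
  obtain ⟨hu, hv⟩ := hp
  simp only [mem_Ioi] at hu hv
  have hs : √p.2 ^ 2 = p.2 := sq_sqrt hv.le
  have hs0 : √p.2 ≠ 0 := (sqrt_pos.2 hv).ne'
  simp only [geomMeanRatio, sqrtCoords, Prod.mk.injEq]
  constructor
  · rw [show p.1 * √p.2 * c * (p.1 / √p.2 * c) = (p.1 * c) ^ 2 by field_simp]
    exact sqrt_sq (by positivity)
  · have : c ≠ 0 := hc.ne'
    have : p.1 ≠ 0 := hu.ne'
    field_simp
    exact hs

theorem sqrtCoords_geomMeanRatio {t : ℝ × ℝ} (ht : t ∈ Ioi 0 ×ˢ Ioi 0) :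
    sqrtCoords (geomMeanRatio t) = t := by
  obtain ⟨ha, hb⟩ := ht
  simp only [mem_Ioi] at ha hb
  simp only [geomMeanRatio, sqrtCoords, ← sqrt_mul (mul_pos ha hb).le,
    ← sqrt_div (mul_pos ha hb).le]
  ext
  · rw [show t.1 * t.2 * (t.1 / t.2) = t.1 ^ 2 by field_simp, sqrt_sq ha.le]
  · rw [show t.1 * t.2 / (t.1 / t.2) = t.2 ^ 2 by field_simp, sqrt_sq hb.le]

theorem mapsTo_sqrtCoords : MapsTo sqrtCoords (Ioi 0 ×ˢ Ioi 0) (Ioi 0 ×ˢ Ioi 0) :=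
  fun _ ⟨hu, hv⟩ => ⟨mul_pos hu (sqrt_pos.2 hv), div_pos hu (sqrt_pos.2 hv)⟩

theorem mapsTo_geomMeanRatio : MapsTo geomMeanRatio (Ioi 0 ×ˢ Ioi 0) (Ioi 0 ×ˢ Ioi 0) :=
  fun _ ⟨ha, hb⟩ => ⟨sqrt_pos.2 (mul_pos ha hb), div_pos (mem_Ioi.1 ha) hb⟩

theorem bijOn_sqrtCoords : BijOn sqrtCoords (Ioi 0 ×ˢ Ioi 0) (Ioi 0 ×ˢ Ioi 0) :=
  InvOn.bijOn
    ⟨fun _ hp => by simpa using geomMeanRatio_sqrtCoords_mul hp one_pos,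
      fun _ ht => sqrtCoords_geomMeanRatio ht⟩
    mapsTo_sqrtCoords mapsTo_geomMeanRatio

theorem setIntegral_quadrant_eq_sqrtCoords {E : Type*} [NormedAddCommGroup E] [NormedSpace ℝ E]
    (f : ℝ × ℝ → E) :
    ∫ t in Ioi 0 ×ˢ Ioi 0, f t = ∫ p in Ioi 0 ×ˢ Ioi 0, (p.1 / p.2) • f (sqrtCoords p) := by
  have hmeas : MeasurableSet (Ioi (0 : ℝ) ×ˢ Ioi (0 : ℝ)) :=
    measurableSet_Ioi.prod measurableSet_Ioi
  conv_lhs => rw [← bijOn_sqrtCoords.image_eq]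
  rw [integral_image_eq_integral_abs_det_fderiv_smul volume hmeas
    (fun p hp => (hasFDerivAt_sqrtCoords hp.2).hasFDerivWithinAt) bijOn_sqrtCoords.injOn]
  refine setIntegral_congr_fun hmeas fun p ⟨hu, hv⟩ => ?_
  rw [det_sqrtCoordsFDeriv hv, abs_neg, abs_of_pos (div_pos hu hv)]

theorem ofReal_cpow_eq_exp_log_mul {x : ℝ} (hx : 0 < x) (w : ℂ) :
    (x : ℂ) ^ w = Complex.exp (Real.log x * w) := by
  rw [Complex.cpow_def_of_ne_zero (by exact_mod_cast hx.ne'), Complex.ofReal_log hx.le]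

theorem jacobian_mul_cpow_sqrtCoords {p : ℝ × ℝ} (hp : p ∈ Ioi 0 ×ˢ Ioi 0) (s : ℂ) :
    ((p.1 / p.2 : ℝ) : ℂ) * (((sqrtCoords p).1 : ℂ) ^ (-s - 1) * ((sqrtCoords p).2 : ℂ) ^ (s - 1))
      = (p.1 : ℂ)⁻¹ * (p.2 : ℂ) ^ (-s - 1) := by
  obtain ⟨hu, hv⟩ := hp
  simp only [mem_Ioi] at hu hv
  have hsv : 0 < √p.2 := sqrt_pos.2 hv
  rw [← Complex.cpow_one ((p.1 / p.2 : ℝ) : ℂ), ← Complex.cpow_neg_one]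
  simp only [sqrtCoords, ofReal_cpow_eq_exp_log_mul (div_pos hu hv),
    ofReal_cpow_eq_exp_log_mul hu, ofReal_cpow_eq_exp_log_mul hv,
    ofReal_cpow_eq_exp_log_mul (mul_pos hu hsv), ofReal_cpow_eq_exp_log_mul (div_pos hu hsv),
    ← Complex.exp_add]
  rw [Real.log_div hu.ne' hv.ne', Real.log_mul hu.ne' hsv.ne', Real.log_div hu.ne' hsv.ne',
    Real.log_sqrt hv.le]
  push_cast
  congr 1
  ring

section Covariance

variable {Q C : ℝ → ℂ} {R : ℝ → ℝ → ℂ}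

theorem covariance_sqrtCoords_mul
    (hR : ∀ a b : ℝ, 0 < a → 0 < b → R a b = Q (√(a * b)) * C (a / b))
    {p : ℝ × ℝ} (hp : p ∈ Ioi 0 ×ˢ Ioi 0) {c : ℝ} (hc : 0 < c) :
    R ((sqrtCoords p).1 * c) ((sqrtCoords p).2 * c) = Q (p.1 * c) * C p.2 := by
  obtain ⟨ha, hb⟩ := mapsTo_sqrtCoords hp
  rw [hR _ _ (mul_pos ha hc) (mul_pos hb hc)]
  exact congrArg (fun t => Q t.1 * C t.2) (geomMeanRatio_sqrtCoords_mul hp hc)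

theorem smul_integrand_sqrtCoords
    (hR : ∀ a b : ℝ, 0 < a → 0 < b → R a b = Q (√(a * b)) * C (a / b))
    {p : ℝ × ℝ} (hp : p ∈ Ioi 0 ×ˢ Ioi 0) {c : ℝ} (hc : 0 < c) (s : ℂ) :
    (p.1 / p.2) • (R ((sqrtCoords p).1 * c) ((sqrtCoords p).2 * c) *
        starRingEnd ℂ (R ((sqrtCoords p).1 / c) ((sqrtCoords p).2 / c)) *
        ((sqrtCoords p).1 : ℂ) ^ (-s - 1) * ((sqrtCoords p).2 : ℂ) ^ (s - 1))
      = Q (p.1 * c) * starRingEnd ℂ (Q (p.1 / c)) / p.1 *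
          ((Complex.normSq (C p.2) : ℂ) * (p.2 : ℂ) ^ (-s - 1)) := by
  have hR' : R ((sqrtCoords p).1 / c) ((sqrtCoords p).2 / c) = Q (p.1 / c) * C p.2 := by
    simpa only [div_eq_mul_inv] using covariance_sqrtCoords_mul hR hp (inv_pos.2 hc)
  rw [covariance_sqrtCoords_mul hR hp hc, hR', Complex.real_smul, ← Complex.mul_conj, map_mul]
  linear_combination Q (p.1 * c) * starRingEnd ℂ (Q (p.1 / c)) * C p.2 * starRingEnd ℂ (C p.2) *
    jacobian_mul_cpow_sqrtCoords hp s

end Covariance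

theorem D1_factorizes_for_lssp_general
    (Q C : ℝ → ℂ) (R : ℝ → ℝ → ℂ)
    (hR : ∀ u v : ℝ, 0 < u → 0 < v → R u v = Q (Real.sqrt (u * v)) * C (u / v))
    (θ τ : ℝ) (hτ : 0 < τ) :
    ∫ p in (Set.Ioi 0 ×ˢ Set.Ioi 0 : Set (ℝ × ℝ)),
        R (p.1 * Real.sqrt τ) (p.2 * Real.sqrt τ) *
          (starRingEnd ℂ) (R (p.1 / Real.sqrt τ) (p.2 / Real.sqrt τ)) *
          (p.1 : ℂ) ^ (-(Complex.I * (2 * π * θ)) - 1) *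
          (p.2 : ℂ) ^ (Complex.I * (2 * π * θ) - 1)
      = (∫ v in Set.Ioi (0 : ℝ),
            ((Complex.normSq (C v) : ℝ) : ℂ) *
              (v : ℂ) ^ (-(Complex.I * (2 * π * θ)) - 1)) *
        ∫ u in Set.Ioi (0 : ℝ),
          Q (u * Real.sqrt τ) * (starRingEnd ℂ) (Q (u / Real.sqrt τ)) / (u : ℂ) := by
  rw [setIntegral_quadrant_eq_sqrtCoords,
    setIntegral_congr_fun (measurableSet_Ioi.prod measurableSet_Ioi)
      fun p hp => smul_integrand_sqrtCoords hR hp (sqrt_pos.2 hτ) _,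
    Measure.volume_eq_prod, mul_comm (∫ v in Ioi (0 : ℝ), _), ← setIntegral_prod_mul]

/-- For a circularly symmetric Gaussian LSSP with covariance
`R(t,s) = Q(√(ts)) C(t/s)`, the cross term `D₁(θ,τ)` factorizes as
`(M|C|²)(i2πθ) · ∫₀^∞ Q(u√τ) Q*(u/√τ) du/u`. -/
theorem D1_factorizes_for_lssp
    (Q C : ℝ → ℂ) (R : ℝ → ℝ → ℂ)
    (hR : ∀ u v : ℝ, 0 < u → 0 < v → R u v = Q (Real.sqrt (u * v)) * C (u / v))
    (θ τ : ℝ) (hτ : 0 < τ)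
    (hInt : IntegrableOn
      (fun p : ℝ × ℝ =>
        R (p.1 * Real.sqrt τ) (p.2 * Real.sqrt τ) *
          (starRingEnd ℂ) (R (p.1 / Real.sqrt τ) (p.2 / Real.sqrt τ)) *
          (p.1 : ℂ) ^ (-(Complex.I * (2 * π * θ)) - 1) *
          (p.2 : ℂ) ^ (Complex.I * (2 * π * θ) - 1))
      (Set.Ioi 0 ×ˢ Set.Ioi 0) volume) :
    ∫ p in (Set.Ioi 0 ×ˢ Set.Ioi 0 : Set (ℝ × ℝ)),
        R (p.1 * Real.sqrt τ) (p.2 * Real.sqrt τ) *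
          (starRingEnd ℂ) (R (p.1 / Real.sqrt τ) (p.2 / Real.sqrt τ)) *
          (p.1 : ℂ) ^ (-(Complex.I * (2 * π * θ)) - 1) *
          (p.2 : ℂ) ^ (Complex.I * (2 * π * θ) - 1)
      = (∫ v in Set.Ioi (0 : ℝ),
            ((Complex.normSq (C v) : ℝ) : ℂ) *
              (v : ℂ) ^ (-(Complex.I * (2 * π * θ)) - 1)) *
        ∫ u in Set.Ioi (0 : ℝ),
          Q (u * Real.sqrt τ) * (starRingEnd ℂ) (Q (u / Real.sqrt τ)) / (u : ℂ) :=
  D1_factorizes_for_lssp_general Q C R hR θ τ hτ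

end
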